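/- arXiv:2301.02417 — 4 statements merged into one kernel-verified Lean document; each statement's English description precedes it below -/
import Mathlib

section
/- Let f(F) = Σ_k μ_k tr(W_k (I − V_kᴴ Ĥ_k F_k)(I − V_kᴴ Ĥ_k F_k)ᴴ) + Σ_k μ_k tr(W_k V_kᴴ (Σ_{l≠k} Ĥ_l F_l F_lᴴ Ĥ_lᴴ) V_k) + Σ_k λ_k (tr(F_k F_kᴴ) − p_k), with all μ_k > 0, W_k Hermitian positive definite, λ_k ≥ 0 fixed. Then f is a convex quadratic function in each F_k, and the stationary point in F_k is F_k = μ_k [Σ_l μ_l Ĥ_kᴴ V_l W_l V_lᴴ Ĥ_k + λ_k I]⁻¹ Ĥ_kᴴ V_k W_k, provided the bracketed matrix is invertible. -/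
open Matrix ComplexOrder Finset

lemma aux_psd_smul {n : ℕ} {A : Matrix (Fin n) (Fin n) ℂ} (hA : A.PosSemidef)
    {r : ℝ} (hr : 0 ≤ r) : ((r : ℂ) • A).PosSemidef := by
  constructor
  · rw [IsHermitian, conjTranspose_smul, hA.isHermitian.eq]
    congr 1
    simp
  · intro x
    have h := mul_nonneg (show (0:ℂ) ≤ (r:ℂ) by exact_mod_cast hr) (hA.2 x)
    simp only [Finsupp.mul_sum] at h
    refine le_of_le_of_eq h (Finsupp.sum_congr fun i _ => Finsupp.sum_congr fun j _ => ?_)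
    simp only [Matrix.smul_apply, smul_eq_mul]
    ring

lemma aux_psd_sum {n : ℕ} {ι : Type*} (s : Finset ι)
    (f : ι → Matrix (Fin n) (Fin n) ℂ) (h : ∀ i ∈ s, (f i).PosSemidef) :
    (∑ i ∈ s, f i).PosSemidef := by
  classical
  induction s using Finset.induction with
  | empty => simpa using (Matrix.PosSemidef.zero (n := Fin n) (R := ℂ))
  | insert _ _ hx ih =>
    rw [Finset.sum_insert hx]
    exact (h _ (Finset.mem_insert_self _ _)).add
      (ih fun i hi => h i (Finset.mem_insert_of_mem hi))

lemma aux_re_trace_psd_nonneg {n m : ℕ} {A : Matrix (Fin n) (Fin n) ℂ} (hA : A.PosSemidef)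
    (Z : Matrix (Fin n) (Fin m) ℂ) : 0 ≤ ((A * (Z * Zᴴ)).trace).re := by
  have h1 : (A * (Z * Zᴴ)).trace = (Zᴴ * A * Z).trace := by
    rw [← Matrix.mul_assoc, Matrix.trace_mul_comm, ← Matrix.mul_assoc]
  rw [h1, Matrix.trace, Complex.re_sum]
  apply Finset.sum_nonneg
  intro i _
  have h2 : (Zᴴ * A * Z).diag i = dotProduct (star (fun a => Z a i)) (A *ᵥ (fun a => Z a i)) := by
    simp [Matrix.diag, Matrix.mul_apply, dotProduct, Matrix.mulVec, Matrix.conjTranspose_apply,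
      Finset.mul_sum, Finset.sum_mul, dotProduct]
    rw [Finset.sum_comm]
    congr 1; ext a; congr 1; ext b; ring
  have := hA.re_dotProduct_nonneg (fun a => Z a i)
  rw [h2]
  simpa using this

lemma aux_re_trace_conj {a b : ℕ} (P Q : Matrix (Fin a) (Fin b) ℂ) :
    ((P * Qᴴ).trace).re = ((Q * Pᴴ).trace).re := by
  have h : (P * Qᴴ)ᴴ = Q * Pᴴ := by simp [conjTranspose_mul]
  rw [← h, Matrix.trace_conjTranspose]
  simp

lemma aux_convex_arith (qU qV bl qF C a b : ℝ) (ha : 0 ≤ a) (hb : 0 ≤ b)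
    (hab : a + b = 1) (h : 0 ≤ (1:ℝ)^2 * qU + 2*(1*(-1))*bl + (-1:ℝ)^2*qV) :
    a^2*qU + 2*(a*b)*bl + b^2*qV - qF + C ≤ a * (qU - qF + C) + b * (qV - qF + C) := by
  have h' : 0 ≤ qU - 2*bl + qV := by linarith
  have hb' : b = 1 - a := by linarith
  have key : a * (qU - qF + C) + b * (qV - qF + C)
      - (a^2*qU + 2*(a*b)*bl + b^2*qV - qF + C) = a*b*(qU - 2*bl + qV) := by
    rw [hb']; ring
  have h2 := mul_nonneg (mul_nonneg ha hb) h'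
  linarith

lemma aux_min_arith (qU qF C : ℝ) (h : 0 ≤ qU) : 0 - qF + C ≤ qU - qF + C := by
  linarith

set_option maxHeartbeats 1000000 in
/-- The WMMSE Lagrangian objective f is a convex quadratic
function of each precoder block F_k (the other blocks fixed), and the
stationary point (i.e. the minimizer over the k-th block) is
F_k = μ_k [Σ_l μ_l Ĥ_kᴴ V_l W_l V_lᴴ Ĥ_k + λ_k I]⁻¹ Ĥ_kᴴ V_k W_k,
provided the bracketed matrix is invertible. -/
theorem stmt10 (M N K : ℕ)
    (μ : Fin K → ℝ) (hμ : ∀ k, 0 < μ k)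
    (W : Fin K → Matrix (Fin N) (Fin N) ℂ) (hW : ∀ k, (W k).PosDef)
    (lam : Fin K → ℝ) (hlam : ∀ k, 0 ≤ lam k)
    (p : Fin K → ℝ)
    (Hh V : Fin K → Matrix (Fin M) (Fin N) ℂ)
    (k : Fin K)
    (hinv : IsUnit (∑ l, (μ l : ℂ) • ((Hh k)ᴴ * V l * W l * (V l)ᴴ * Hh k)
        + (lam k : ℂ) • (1 : Matrix (Fin N) (Fin N) ℂ)).det) :
    let f : (Fin K → Matrix (Fin N) (Fin N) ℂ) → ℝ := fun F =>
      (∑ j, μ j * ((W j * (1 - (V j)ᴴ * Hh j * F j)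
          * (1 - (V j)ᴴ * Hh j * F j)ᴴ).trace).re)
      + (∑ j, μ j * ((W j * (V j)ᴴ
          * (∑ l ∈ Finset.univ.erase j, Hh l * F l * (F l)ᴴ * (Hh l)ᴴ)
          * V j).trace).re)
      + ∑ j, lam j * (((F j * (F j)ᴴ).trace).re - p j)
    let Fstar : Matrix (Fin N) (Fin N) ℂ :=
      (μ k : ℂ) • ((∑ l, (μ l : ℂ) • ((Hh k)ᴴ * V l * W l * (V l)ᴴ * Hh k)
          + (lam k : ℂ) • (1 : Matrix (Fin N) (Fin N) ℂ))⁻¹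
        * ((Hh k)ᴴ * V k * W k))
    ∀ F : Fin K → Matrix (Fin N) (Fin N) ℂ,
      ConvexOn ℝ Set.univ (fun X => f (Function.update F k X)) ∧
      (∀ X : Matrix (Fin N) (Fin N) ℂ,
        f (Function.update F k Fstar) ≤ f (Function.update F k X)) := by
  intro f Fstar F
  simp only [f, Fstar]
  set A : Matrix (Fin N) (Fin N) ℂ :=
    ∑ l, (μ l : ℂ) • ((Hh k)ᴴ * V l * W l * (V l)ᴴ * Hh k)
      + (lam k : ℂ) • (1 : Matrix (Fin N) (Fin N) ℂ) with hA
  set B : Matrix (Fin N) (Fin N) ℂ := (Hh k)ᴴ * V k * W k with hB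
  set Fs : Matrix (Fin N) (Fin N) ℂ := (μ k : ℂ) • (A⁻¹ * B) with hFs
  have hApsd : A.PosSemidef := by
    rw [hA]
    apply Matrix.PosSemidef.add
    · apply aux_psd_sum
      intro l _
      have h1 : (Hh k)ᴴ * V l * W l * (V l)ᴴ * Hh k
          = ((Hh k)ᴴ * V l) * W l * ((Hh k)ᴴ * V l)ᴴ := by
        simp [conjTranspose_mul, Matrix.mul_assoc]
      rw [h1]
      exact aux_psd_smul ((hW l).posSemidef.mul_mul_conjTranspose_same ((Hh k)ᴴ * V l))
        (le_of_lt (hμ l))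
    · exact aux_psd_smul Matrix.PosSemidef.one (hlam k)
  have hAinv : A * A⁻¹ = 1 := Matrix.mul_nonsing_inv A hinv
  have hAF : A * Fs = (μ k : ℂ) • B := by
    rw [hFs, mul_smul_comm, ← Matrix.mul_assoc, hAinv, Matrix.one_mul]
  have hq0 : ∀ Z : Matrix (Fin N) (Fin N) ℂ, 0 ≤ ((A * (Z * Zᴴ)).trace).re :=
    fun Z => aux_re_trace_psd_nonneg hApsd Z
  have hsym : ∀ Z Y : Matrix (Fin N) (Fin N) ℂ,
      ((A * (Y * Zᴴ)).trace).re = ((A * (Z * Yᴴ)).trace).re := by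
    intro Z Y
    have h1 : (A * (Y * Zᴴ))ᴴ = (Z * Yᴴ) * A := by
      simp [conjTranspose_mul, hApsd.isHermitian.eq, Matrix.mul_assoc]
    calc ((A * (Y * Zᴴ)).trace).re = (((A * (Y * Zᴴ))ᴴ).trace).re := by
          rw [Matrix.trace_conjTranspose]; simp
      _ = (((Z * Yᴴ) * A).trace).re := by rw [h1]
      _ = ((A * (Z * Yᴴ)).trace).re := by rw [Matrix.trace_mul_comm]
  have hcross : ∀ X : Matrix (Fin N) (Fin N) ℂ,
      ((A * (Fs * Xᴴ)).trace).re = μ k * ((Bᴴ * X).trace).re := by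
    intro X
    have h2 : ((B * Xᴴ).trace).re = ((Bᴴ * X).trace).re := by
      rw [aux_re_trace_conj B X, Matrix.trace_mul_comm]
    rw [← Matrix.mul_assoc, hAF, smul_mul_assoc, Matrix.trace_smul, smul_eq_mul,
      Complex.re_ofReal_mul, h2]
  have hbb : ∀ (r s : ℝ) (Z Y : Matrix (Fin N) (Fin N) ℂ),
      ((A * ((r • Z + s • Y) * (r • Z + s • Y)ᴴ)).trace).re
        = r^2 * ((A * (Z * Zᴴ)).trace).re + 2*(r*s) * ((A * (Z * Yᴴ)).trace).re
          + s^2 * ((A * (Y * Yᴴ)).trace).re := by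
    intro r s Z Y
    have h1 : (r • Z + s • Y) * (r • Z + s • Y)ᴴ
        = (r*r) • (Z * Zᴴ) + (r*s) • (Z * Yᴴ) + (s*r) • (Y * Zᴴ) + (s*s) • (Y * Yᴴ) := by
      simp [conjTranspose_add, conjTranspose_smul, add_mul, mul_add, smul_smul,
        smul_mul_assoc, mul_smul_comm]
      module
    rw [h1]
    simp only [Matrix.mul_add, mul_smul_comm, Matrix.trace_add, Matrix.trace_smul,
      Complex.add_re, Complex.smul_re]
    rw [hsym Z Y]
    simp only [smul_eq_mul]
    ring
  have hBH : Bᴴ = W k * ((V k)ᴴ * Hh k) := by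
    rw [hB]
    simp [conjTranspose_mul, (hW k).isHermitian.eq, Matrix.mul_assoc]
  have hS1 : ∀ X : Matrix (Fin N) (Fin N) ℂ,
      (∑ j, μ j * ((W j * (1 - (V j)ᴴ * Hh j * Function.update F k X j)
          * (1 - (V j)ᴴ * Hh j * Function.update F k X j)ᴴ).trace).re)
      = μ k * (((Hh k)ᴴ * V k * W k * (V k)ᴴ * Hh k * (X * Xᴴ)).trace).re
        - 2 * μ k * ((Bᴴ * X).trace).re + μ k * ((W k).trace).re
        + ∑ j ∈ Finset.univ.erase k, μ j * ((W j * (1 - (V j)ᴴ * Hh j * F j)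
          * (1 - (V j)ᴴ * Hh j * F j)ᴴ).trace).re := by
    intro X
    rw [← Finset.sum_erase_add _ _ (Finset.mem_univ k)]
    have hc1 : (∑ j ∈ Finset.univ.erase k, μ j * ((W j * (1 - (V j)ᴴ * Hh j * Function.update F k X j)
          * (1 - (V j)ᴴ * Hh j * Function.update F k X j)ᴴ).trace).re)
        = ∑ j ∈ Finset.univ.erase k, μ j * ((W j * (1 - (V j)ᴴ * Hh j * F j)
          * (1 - (V j)ᴴ * Hh j * F j)ᴴ).trace).re :=
      Finset.sum_congr rfl fun j hj => by
        rw [Function.update_of_ne (Finset.ne_of_mem_erase hj)]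
    rw [hc1, Function.update_self]
    have e1 : W k * (1 - (V k)ᴴ * Hh k * X) * (1 - (V k)ᴴ * Hh k * X)ᴴ
        = W k - W k * (Xᴴ * ((V k)ᴴ * Hh k)ᴴ) - W k * ((V k)ᴴ * Hh k) * X
          + W k * ((V k)ᴴ * Hh k) * (X * Xᴴ) * ((V k)ᴴ * Hh k)ᴴ := by
      have hct : (1 - (V k)ᴴ * Hh k * X)ᴴ = 1 - Xᴴ * ((V k)ᴴ * Hh k)ᴴ := by
        simp [conjTranspose_sub, conjTranspose_mul, Matrix.mul_assoc]
      rw [hct]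
      noncomm_ring
    have t1 : ((W k * (Xᴴ * ((V k)ᴴ * Hh k)ᴴ)).trace).re = ((Bᴴ * X).trace).re := by
      have h3 : Xᴴ * ((V k)ᴴ * Hh k)ᴴ = (((V k)ᴴ * Hh k) * X)ᴴ := by
        simp [conjTranspose_mul]
      rw [h3, aux_re_trace_conj (W k) (((V k)ᴴ * Hh k) * X), Matrix.trace_mul_comm,
        (hW k).isHermitian.eq, hBH]
      simp [Matrix.mul_assoc]
    have t2 : W k * ((V k)ᴴ * Hh k) * X = Bᴴ * X := by rw [← hBH]
    have t3 : (W k * ((V k)ᴴ * Hh k) * (X * Xᴴ) * ((V k)ᴴ * Hh k)ᴴ).trace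
        = ((Hh k)ᴴ * V k * W k * (V k)ᴴ * Hh k * (X * Xᴴ)).trace := by
      rw [Matrix.trace_mul_comm]
      simp [conjTranspose_mul, Matrix.mul_assoc]
    rw [e1]
    simp only [Matrix.trace_add, Matrix.trace_sub, Complex.add_re, Complex.sub_re, t1, t2, t3]
    ring
  have hS3 : ∀ X : Matrix (Fin N) (Fin N) ℂ,
      (∑ j, lam j * (((Function.update F k X j * (Function.update F k X j)ᴴ).trace).re - p j))
      = lam k * ((X * Xᴴ).trace).re - lam k * p k
        + ∑ j ∈ Finset.univ.erase k, lam j * (((F j * (F j)ᴴ).trace).re - p j) := by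
    intro X
    rw [← Finset.sum_erase_add _ _ (Finset.mem_univ k), Function.update_self]
    have hc3 : (∑ j ∈ Finset.univ.erase k, lam j * (((Function.update F k X j * (Function.update F k X j)ᴴ).trace).re - p j))
        = ∑ j ∈ Finset.univ.erase k, lam j * (((F j * (F j)ᴴ).trace).re - p j) :=
      Finset.sum_congr rfl fun j hj => by
        rw [Function.update_of_ne (Finset.ne_of_mem_erase hj)]
    rw [hc3]
    ring
  have hS2 : ∀ X : Matrix (Fin N) (Fin N) ℂ,
      (∑ j, μ j * ((W j * (V j)ᴴ
          * (∑ l ∈ Finset.univ.erase j, Hh l * Function.update F k X l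
              * (Function.update F k X l)ᴴ * (Hh l)ᴴ) * V j).trace).re)
      = (∑ j ∈ Finset.univ.erase k, μ j * (((Hh k)ᴴ * V j * W j * (V j)ᴴ * Hh k * (X * Xᴴ)).trace).re)
        + ((∑ j ∈ Finset.univ.erase k, μ j * ((W j * (V j)ᴴ
            * (∑ l ∈ (Finset.univ.erase j).erase k, Hh l * F l * (F l)ᴴ * (Hh l)ᴴ) * V j).trace).re)
        + μ k * ((W k * (V k)ᴴ
            * (∑ l ∈ Finset.univ.erase k, Hh l * F l * (F l)ᴴ * (Hh l)ᴴ) * V k).trace).re) := by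
    intro X
    rw [← Finset.sum_erase_add _ _ (Finset.mem_univ k)]
    have hk : (∑ l ∈ Finset.univ.erase k, Hh l * Function.update F k X l
          * (Function.update F k X l)ᴴ * (Hh l)ᴴ)
        = ∑ l ∈ Finset.univ.erase k, Hh l * F l * (F l)ᴴ * (Hh l)ᴴ :=
      Finset.sum_congr rfl fun l hl => by
        rw [Function.update_of_ne (Finset.ne_of_mem_erase hl)]
    rw [hk]
    have hj : (∑ j ∈ Finset.univ.erase k, μ j * ((W j * (V j)ᴴ
          * (∑ l ∈ Finset.univ.erase j, Hh l * Function.update F k X l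
              * (Function.update F k X l)ᴴ * (Hh l)ᴴ) * V j).trace).re)
        = ∑ j ∈ Finset.univ.erase k,
            (μ j * (((Hh k)ᴴ * V j * W j * (V j)ᴴ * Hh k * (X * Xᴴ)).trace).re
            + μ j * ((W j * (V j)ᴴ
              * (∑ l ∈ (Finset.univ.erase j).erase k, Hh l * F l * (F l)ᴴ * (Hh l)ᴴ)
              * V j).trace).re) := by
      refine Finset.sum_congr rfl fun j hjk => ?_
      have hkj : k ∈ Finset.univ.erase j :=
        Finset.mem_erase.mpr ⟨(Finset.ne_of_mem_erase hjk).symm, Finset.mem_univ k⟩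
      rw [← Finset.sum_erase_add _ _ hkj, Function.update_self]
      have hc : (∑ l ∈ (Finset.univ.erase j).erase k, Hh l * Function.update F k X l
            * (Function.update F k X l)ᴴ * (Hh l)ᴴ)
          = ∑ l ∈ (Finset.univ.erase j).erase k, Hh l * F l * (F l)ᴴ * (Hh l)ᴴ :=
        Finset.sum_congr rfl fun l hl => by
          rw [Function.update_of_ne (Finset.ne_of_mem_erase hl)]
      rw [hc, Matrix.mul_add, Matrix.add_mul, Matrix.trace_add, Complex.add_re]
      have cyc : (W j * (V j)ᴴ * (Hh k * X * Xᴴ * (Hh k)ᴴ) * V j).trace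
          = ((Hh k)ᴴ * V j * W j * (V j)ᴴ * Hh k * (X * Xᴴ)).trace := by
        rw [show W j * (V j)ᴴ * (Hh k * X * Xᴴ * (Hh k)ᴴ) * V j
            = (W j * ((V j)ᴴ * (Hh k * (X * Xᴴ)))) * ((Hh k)ᴴ * V j) by
          simp [Matrix.mul_assoc]]
        rw [Matrix.trace_mul_comm]
        simp [Matrix.mul_assoc]
      rw [cyc]
      ring
    rw [hj, Finset.sum_add_distrib]
    ring
  have hqsplit : ∀ Z : Matrix (Fin N) (Fin N) ℂ, ((A * (Z * Zᴴ)).trace).re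
      = μ k * (((Hh k)ᴴ * V k * W k * (V k)ᴴ * Hh k * (Z * Zᴴ)).trace).re
        + (∑ j ∈ Finset.univ.erase k, μ j * (((Hh k)ᴴ * V j * W j * (V j)ᴴ * Hh k * (Z * Zᴴ)).trace).re)
        + lam k * ((Z * Zᴴ).trace).re := by
    intro Z
    rw [hA, Matrix.add_mul, Finset.sum_mul, Matrix.trace_add, Complex.add_re, Matrix.trace_sum]
    simp only [smul_mul_assoc, Matrix.trace_smul, smul_eq_mul, Complex.re_sum,
      Complex.re_ofReal_mul, Matrix.one_mul]
    rw [← Finset.sum_erase_add _ _ (Finset.mem_univ k)]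
    ring
  have hrep : ∀ X : Matrix (Fin N) (Fin N) ℂ,
      (∑ j, μ j * ((W j * (1 - (V j)ᴴ * Hh j * Function.update F k X j)
          * (1 - (V j)ᴴ * Hh j * Function.update F k X j)ᴴ).trace).re)
      + (∑ j, μ j * ((W j * (V j)ᴴ
          * (∑ l ∈ Finset.univ.erase j, Hh l * Function.update F k X l
              * (Function.update F k X l)ᴴ * (Hh l)ᴴ) * V j).trace).re)
      + (∑ j, lam j * (((Function.update F k X j * (Function.update F k X j)ᴴ).trace).re - p j))
      = ((A * (X * Xᴴ)).trace).re - 2 * μ k * ((Bᴴ * X).trace).re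
        + (μ k * ((W k).trace).re
          + (∑ j ∈ Finset.univ.erase k, μ j * ((W j * (1 - (V j)ᴴ * Hh j * F j)
              * (1 - (V j)ᴴ * Hh j * F j)ᴴ).trace).re)
          + (∑ j ∈ Finset.univ.erase k, μ j * ((W j * (V j)ᴴ
              * (∑ l ∈ (Finset.univ.erase j).erase k, Hh l * F l * (F l)ᴴ * (Hh l)ᴴ)
              * V j).trace).re)
          + μ k * ((W k * (V k)ᴴ
              * (∑ l ∈ Finset.univ.erase k, Hh l * F l * (F l)ᴴ * (Hh l)ᴴ) * V k).trace).re
          - lam k * p k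
          + ∑ j ∈ Finset.univ.erase k, lam j * (((F j * (F j)ᴴ).trace).re - p j)) := by
    intro X
    rw [hS1 X, hS2 X, hS3 X, hqsplit X]
    ring
  have hkey : ∀ X : Matrix (Fin N) (Fin N) ℂ,
      ((A * (X * Xᴴ)).trace).re - 2 * μ k * ((Bᴴ * X).trace).re
      = ((A * ((X - Fs) * (X - Fs)ᴴ)).trace).re - ((A * (Fs * Fsᴴ)).trace).re := by
    intro X
    have h1 : X - Fs = (1:ℝ) • X + (-1:ℝ) • Fs := by
      rw [one_smul, neg_one_smul, ← sub_eq_add_neg]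
    rw [h1, hbb 1 (-1) X Fs]
    have h2 : ((A * (X * Fsᴴ)).trace).re = μ k * ((Bᴴ * X).trace).re := by
      rw [← hsym X Fs, hcross X]
    rw [h2]
    ring
  constructor
  · refine ⟨convex_univ, ?_⟩
    intro x hx y hy a b ha hb hab
    dsimp only
    simp only [smul_eq_mul]
    rw [hrep (a • x + b • y), hrep x, hrep y, hkey (a • x + b • y), hkey x, hkey y]
    have h1 : a • Fs + b • Fs = Fs := by rw [← add_smul, hab, one_smul]
    have hco : a • x + b • y - Fs = a • (x - Fs) + b • (y - Fs) := by
      rw [smul_sub, smul_sub]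
      rw [show a • x - a • Fs + (b • y - b • Fs)
          = a • x + b • y - (a • Fs + b • Fs) by abel, h1]
    rw [hco, hbb a b (x - Fs) (y - Fs)]
    have h2' : (x - Fs) - (y - Fs) = (1:ℝ) • (x - Fs) + (-1:ℝ) • (y - Fs) := by
      rw [one_smul, neg_one_smul, ← sub_eq_add_neg]
    have e3 := hq0 ((x - Fs) - (y - Fs))
    rw [h2', hbb 1 (-1) (x - Fs) (y - Fs)] at e3
    exact aux_convex_arith _ _ _ _ _ a b ha hb hab e3
  · intro X
    rw [hrep X, hrep Fs, hkey X, hkey Fs, sub_self Fs]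
    simp only [Matrix.zero_mul, Matrix.mul_zero, conjTranspose_zero, Matrix.trace_zero,
      Complex.zero_re]
    exact aux_min_arith _ _ _ (hq0 (X - Fs))
end

section
/- Let B ∈ ℂ^{M×M} be Hermitian positive definite and C ∈ ℂ^{M×N}. The two receivers A₁ = (B + C Cᴴ)⁻¹ C and A₂ = B⁻¹ C (equivalently A₁ = (B − CCᴴ + CCᴴ)⁻¹C with self-interference included or excluded) are related by A₁ = A₂ (I_N + Cᴴ B⁻¹ C)⁻¹; in particular A₁ = A₂ M for an invertible matrix M, so both achieve the same value of the SINR-based rate log₂ det(I + Dᴴ Σ⁻¹ D) where D = Aᴴ C and Σ = Aᴴ B A. -/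
open Matrix ComplexOrder

/-- For B Hermitian positive definite, the receivers
A₁ = (B + C Cᴴ)⁻¹ C and A₂ = B⁻¹ C satisfy A₁ = A₂ (I + Cᴴ B⁻¹ C)⁻¹ with
I + Cᴴ B⁻¹ C invertible, and both achieve the same SINR-based rate
log₂ det(I + Dᴴ Σ⁻¹ D) where D = Aᴴ C and Σ = Aᴴ B A. -/
theorem stmt11 (M N : ℕ) (B : Matrix (Fin M) (Fin M) ℂ) (hB : B.PosDef)
    (C : Matrix (Fin M) (Fin N) ℂ) :
    let A₁ : Matrix (Fin M) (Fin N) ℂ := (B + C * Cᴴ)⁻¹ * C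
    let A₂ : Matrix (Fin M) (Fin N) ℂ := B⁻¹ * C
    IsUnit ((1 : Matrix (Fin N) (Fin N) ℂ) + Cᴴ * B⁻¹ * C).det ∧
    A₁ = A₂ * ((1 : Matrix (Fin N) (Fin N) ℂ) + Cᴴ * B⁻¹ * C)⁻¹ ∧
    Real.logb 2 (((1 : Matrix (Fin N) (Fin N) ℂ)
        + (A₁ᴴ * C)ᴴ * (A₁ᴴ * B * A₁)⁻¹ * (A₁ᴴ * C)).det.re)
      = Real.logb 2 (((1 : Matrix (Fin N) (Fin N) ℂ)
        + (A₂ᴴ * C)ᴴ * (A₂ᴴ * B * A₂)⁻¹ * (A₂ᴴ * C)).det.re) := by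
  intro A₁ A₂
  -- basic facts
  have hBdet : IsUnit B.det := hB.det_pos.ne'.isUnit
  have hBinv : (B⁻¹).PosDef := hB.inv
  have hBinvH : (B⁻¹).IsHermitian := hBinv.isHermitian
  -- Σ := Cᴴ B⁻¹ C is PSD and Hermitian
  set S : Matrix (Fin N) (Fin N) ℂ := Cᴴ * B⁻¹ * C with hSdef
  have hSpsd : S.PosSemidef := by
    simpa [hSdef, Matrix.mul_assoc] using hBinv.posSemidef.conjTranspose_mul_mul_same C
  have hSH : S.IsHermitian := hSpsd.isHermitian
  -- K := 1 + S is positive definite, hence invertible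
  set K : Matrix (Fin N) (Fin N) ℂ := 1 + S with hKdef
  have hKpd : K.PosDef := Matrix.PosDef.add_posSemidef Matrix.PosDef.one hSpsd
  have hKdet : IsUnit K.det := hKpd.det_pos.ne'.isUnit
  -- B + CCᴴ is positive definite
  have hBCpd : (B + C * Cᴴ).PosDef :=
    hB.add_posSemidef (Matrix.posSemidef_self_mul_conjTranspose C)
  have hBCdet : IsUnit (B + C * Cᴴ).det := hBCpd.det_pos.ne'.isUnit
  -- key identity : (B + CCᴴ) * (A₂ * K⁻¹) = C
  have hkey : (B + C * Cᴴ) * (A₂ * K⁻¹) = C := by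
    have h1 : (B + C * Cᴴ) * A₂ = C * K := by
      show (B + C * Cᴴ) * (B⁻¹ * C) = C * K
      rw [Matrix.add_mul, ← Matrix.mul_assoc, Matrix.mul_nonsing_inv B hBdet,
        Matrix.one_mul, hKdef, Matrix.mul_add, Matrix.mul_one, hSdef]
      rw [Matrix.mul_assoc, Matrix.mul_assoc]
    rw [← Matrix.mul_assoc, h1, Matrix.mul_assoc, Matrix.mul_nonsing_inv K hKdet,
      Matrix.mul_one]
  have hA1 : A₁ = A₂ * K⁻¹ := by
    show (B + C * Cᴴ)⁻¹ * C = A₂ * K⁻¹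
    have h2 : (B + C * Cᴴ)⁻¹ * ((B + C * Cᴴ) * (A₂ * K⁻¹)) = A₂ * K⁻¹ := by
      rw [← Matrix.mul_assoc, Matrix.nonsing_inv_mul _ hBCdet, Matrix.one_mul]
    rw [hkey] at h2
    exact h2
  refine ⟨hKdet, hA1, ?_⟩
  -- rate equality
  have hA2C : A₂ᴴ * C = S := by
    show (B⁻¹ * C)ᴴ * C = S
    rw [Matrix.conjTranspose_mul, hBinvH.eq, hSdef, Matrix.mul_assoc]
  have hA2BA2 : A₂ᴴ * B * A₂ = S := by
    show (B⁻¹ * C)ᴴ * B * (B⁻¹ * C) = S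
    rw [Matrix.conjTranspose_mul, hBinvH.eq]
    calc Cᴴ * B⁻¹ * B * (B⁻¹ * C)
        = Cᴴ * ((B⁻¹ * B) * B⁻¹) * C := by simp only [Matrix.mul_assoc]
      _ = S := by
          rw [Matrix.nonsing_inv_mul B hBdet, Matrix.one_mul, hSdef, Matrix.mul_assoc]
  have hA1C : A₁ᴴ * C = (K⁻¹)ᴴ * S := by
    rw [hA1, Matrix.conjTranspose_mul, Matrix.mul_assoc, hA2C]
  have hA1BA1 : A₁ᴴ * B * A₁ = (K⁻¹)ᴴ * S * K⁻¹ := by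
    rw [hA1, Matrix.conjTranspose_mul]
    calc (K⁻¹)ᴴ * A₂ᴴ * B * (A₂ * K⁻¹)
        = (K⁻¹)ᴴ * (A₂ᴴ * B * A₂) * K⁻¹ := by
          simp only [Matrix.mul_assoc]
      _ = (K⁻¹)ᴴ * S * K⁻¹ := by rw [hA2BA2]
  by_cases hS : IsUnit S.det
  · -- S invertible : both expressions equal 1 + S
    have hinv : ((K⁻¹)ᴴ * S * K⁻¹)⁻¹ = K * S⁻¹ * Kᴴ := by
      rw [Matrix.mul_inv_rev, Matrix.mul_inv_rev, Matrix.nonsing_inv_nonsing_inv _ hKdet,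
        ← Matrix.conjTranspose_nonsing_inv, Matrix.nonsing_inv_nonsing_inv _ hKdet,
        Matrix.mul_assoc]
    have hKKinv : K⁻¹ * K = 1 := Matrix.nonsing_inv_mul K hKdet
    have hKHinv : Kᴴ * (K⁻¹)ᴴ = 1 := by
      rw [← Matrix.conjTranspose_mul, hKKinv, Matrix.conjTranspose_one]
    have hSS : S * S⁻¹ * S = S := by
      rw [Matrix.mul_nonsing_inv S hS, Matrix.one_mul]
    have e1 : (A₁ᴴ * C)ᴴ * (A₁ᴴ * B * A₁)⁻¹ * (A₁ᴴ * C) = S := by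
      rw [hA1C, hA1BA1, hinv, Matrix.conjTranspose_mul, Matrix.conjTranspose_conjTranspose,
        hSH.eq]
      calc S * K⁻¹ * (K * S⁻¹ * Kᴴ) * ((K⁻¹)ᴴ * S)
          = S * (K⁻¹ * K) * S⁻¹ * (Kᴴ * (K⁻¹)ᴴ) * S := by
            simp only [Matrix.mul_assoc]
        _ = S := by rw [hKKinv, hKHinv, Matrix.mul_one, Matrix.mul_one, hSS]
    have e2 : (A₂ᴴ * C)ᴴ * (A₂ᴴ * B * A₂)⁻¹ * (A₂ᴴ * C) = S := by
      rw [hA2C, hA2BA2, hSH.eq, hSS]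
    rw [e1, e2]
  · -- S not invertible: both inverses are 0
    have h1 : (A₂ᴴ * B * A₂)⁻¹ = 0 := by
      rw [hA2BA2]; exact Matrix.nonsing_inv_apply_not_isUnit S hS
    have h2 : (A₁ᴴ * B * A₁)⁻¹ = 0 := by
      rw [hA1BA1]
      apply Matrix.nonsing_inv_apply_not_isUnit
      intro h
      rw [Matrix.det_mul, Matrix.det_mul] at h
      exact hS (isUnit_of_mul_isUnit_right (isUnit_of_mul_isUnit_left h))
    rw [h1, h2]
    simp
end

section
/- Let A ∈ ℂ^{M×N}, and let Σ be Hermitian positive definite M×M of the form Σ = Σ₁ − DDᴴ + Σ₂ arising with D = Aᴴ C for some C ∈ ℂ^{M×N}. If A′ = A M for an invertible matrix M ∈ ℂ^{N×N}, then log₂ det(I_N + D′ᴴ Σ′⁻¹ D′) = log₂ det(I_N + Dᴴ Σ⁻¹ D), where D′ = A′ᴴ C and Σ′ = A′ᴴ B A′ − D′D′ᴴ for B Hermitian positive definite with Σ = Aᴴ B A − DDᴴ. -/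
open Matrix ComplexOrder

/-- The achievable-SE expression log₂ det(I + Dᴴ Σ⁻¹ D), with
D = Aᴴ C and Σ = Aᴴ B A − D Dᴴ, is invariant under right-multiplication of the
receiver A by an invertible matrix M. -/
theorem stmt14 (M N : ℕ) (B : Matrix (Fin M) (Fin M) ℂ) (hB : B.PosDef)
    (C : Matrix (Fin M) (Fin N) ℂ) (A : Matrix (Fin M) (Fin N) ℂ)
    (Mm : Matrix (Fin N) (Fin N) ℂ) (hMm : IsUnit Mm.det) :
    let A' := A * Mm
    let D := Aᴴ * C
    let D' := A'ᴴ * C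
    let S := Aᴴ * B * A - D * Dᴴ
    let S' := A'ᴴ * B * A' - D' * D'ᴴ
    S.PosDef → S'.PosDef →
    Real.logb 2 (((1 : Matrix (Fin N) (Fin N) ℂ) + D'ᴴ * S'⁻¹ * D').det.re)
      = Real.logb 2 (((1 : Matrix (Fin N) (Fin N) ℂ) + Dᴴ * S⁻¹ * D).det.re) := by
  intro A' D D' S S' hS hS'
  have hMmH : IsUnit (Mmᴴ).det := by
    rw [Matrix.det_conjTranspose]; exact hMm.star
  have hD' : D' = Mmᴴ * D := by
    simp only [D', D, A', Matrix.conjTranspose_mul, Matrix.mul_assoc]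
  have hS'eq : S' = Mmᴴ * S * Mm := by
    simp only [S', S, A', hD', Matrix.conjTranspose_mul,
      Matrix.conjTranspose_conjTranspose]
    rw [Matrix.mul_sub, Matrix.sub_mul]
    simp only [Matrix.mul_assoc]
  have key : D'ᴴ * S'⁻¹ * D' = Dᴴ * S⁻¹ * D := by
    rw [hS'eq, hD', Matrix.mul_inv_rev, Matrix.mul_inv_rev,
      Matrix.conjTranspose_mul, Matrix.conjTranspose_conjTranspose]
    calc Dᴴ * Mm * (Mm⁻¹ * (S⁻¹ * (Mmᴴ)⁻¹)) * (Mmᴴ * D)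
        = Dᴴ * (Mm * Mm⁻¹) * S⁻¹ * ((Mmᴴ)⁻¹ * Mmᴴ) * D := by
          simp only [Matrix.mul_assoc]
      _ = Dᴴ * S⁻¹ * D := by
          rw [Matrix.mul_nonsing_inv _ hMm, Matrix.nonsing_inv_mul _ hMmH,
            Matrix.mul_one, Matrix.mul_one]
  rw [key]
end

section
/- Let M ∈ ℂ^{N×N} be Hermitian positive semidefinite with eigendecomposition M = D Λ Dᴴ, and N ∈ ℂ^{N×N}. Define F(λ) = (M + λ I)⁻¹ N for λ > 0. Then tr(F(λ) F(λ)ᴴ) = Σ_n Φ_{nn}/(Λ_{nn} + λ)², where Φ = Dᴴ N Nᴴ D; consequently λ ↦ tr(F(λ)F(λ)ᴴ) is continuous, strictly decreasing on (0,∞) whenever N ≠ 0, and tends to 0 as λ → ∞, so for any p with 0 < p < lim_{λ→0⁺} tr(F(λ)F(λ)ᴴ) there exists a unique λ* > 0 with tr(F(λ*)F(λ*)ᴴ) = p. -/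
open Matrix ComplexOrder

/-- Corollary 4 and correctness of the bisection search: with
M = D Λ Dᴴ Hermitian PSD (D unitary, Λ = diag(d) with d ≥ 0) and
F(λ) = (M + λI)⁻¹ N, one has tr(F(λ)F(λ)ᴴ) = Σ_n Φ_{nn}/(d_n + λ)² with
Φ = Dᴴ N Nᴴ D; this function of λ is continuous on (0,∞), strictly decreasing
there whenever N ≠ 0, tends to 0 at infinity, and hence attains any power level
p (0 < p below its small-λ values) at a unique λ* > 0. -/
theorem stmt18 (N : ℕ) (Mm Nm : Matrix (Fin N) (Fin N) ℂ)
    (Dm : Matrix (Fin N) (Fin N) ℂ) (hDm : Dm ∈ Matrix.unitaryGroup (Fin N) ℂ)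
    (d : Fin N → ℝ) (hd : ∀ n, 0 ≤ d n)
    (hM : Mm = Dm * Matrix.diagonal (fun n => (d n : ℂ)) * Dmᴴ) :
    let F : ℝ → Matrix (Fin N) (Fin N) ℂ :=
      fun t => (Mm + (t : ℂ) • (1 : Matrix (Fin N) (Fin N) ℂ))⁻¹ * Nm
    let Φ : Matrix (Fin N) (Fin N) ℂ := Dmᴴ * Nm * Nmᴴ * Dm
    let g : ℝ → ℝ := fun t => ((F t * (F t)ᴴ).trace).re
    (∀ t : ℝ, 0 < t → g t = ∑ n, (Φ n n).re / (d n + t) ^ 2) ∧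
    ContinuousOn g (Set.Ioi (0 : ℝ)) ∧
    (Nm ≠ 0 → StrictAntiOn g (Set.Ioi (0 : ℝ))) ∧
    Filter.Tendsto g Filter.atTop (nhds 0) ∧
    (Nm ≠ 0 → ∀ p : ℝ, 0 < p → (∃ t₀ > (0 : ℝ), p < g t₀) →
      ∃! tstar : ℝ, 0 < tstar ∧ g tstar = p) := by
  intro F Φ g
  have hU1 : Dm * Dmᴴ = 1 := by
    have := Matrix.mem_unitaryGroup_iff.mp hDm
    simpa [Matrix.star_eq_conjTranspose] using this
  have hU2 : Dmᴴ * Dm = 1 := by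
    have := Matrix.mem_unitaryGroup_iff'.mp hDm
    simpa [Matrix.star_eq_conjTranspose] using this
  set B : Matrix (Fin N) (Fin N) ℂ := Dmᴴ * Nm with hB
  set φ : Fin N → ℝ := fun n => ∑ k, Complex.normSq (B n k) with hφ
  have hφ0 : ∀ n, 0 ≤ φ n := fun n => Finset.sum_nonneg fun k _ => Complex.normSq_nonneg _
  have hΦB : Φ = B * Bᴴ := by
    simp only [hB, Matrix.conjTranspose_mul, Matrix.conjTranspose_conjTranspose, Φ]
    rw [Matrix.mul_assoc, Matrix.mul_assoc]
  have hΦd : ∀ n, Φ n n = (φ n : ℂ) := by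
    intro n
    rw [hΦB]
    simp only [Matrix.mul_apply, Matrix.conjTranspose_apply, hφ]
    push_cast
    congr 1
    funext k
    rw [← Complex.mul_conj]
    rfl
  -- the main formula
  have hg : ∀ t : ℝ, 0 < t → g t = ∑ n, φ n / (d n + t) ^ 2 := by
    intro t ht
    have he : ∀ n, (0:ℝ) < d n + t := fun n => add_pos_of_nonneg_of_pos (hd n) ht
    have hene : ∀ n, (d n + t : ℝ) ≠ 0 := fun n => (he n).ne'
    set c : Fin N → ℂ := fun n => (((d n + t)⁻¹ : ℝ) : ℂ) with hc
    have hsum : Mm + (t:ℂ) • (1 : Matrix (Fin N) (Fin N) ℂ)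
        = Dm * Matrix.diagonal (fun n => ((d n + t : ℝ) : ℂ)) * Dmᴴ := by
      have h1 : (Matrix.diagonal fun n => ((d n + t : ℝ) : ℂ))
          = Matrix.diagonal (fun n => (d n : ℂ)) + (t:ℂ) • (1 : Matrix (Fin N) (Fin N) ℂ) := by
        rw [Matrix.smul_one_eq_diagonal, Matrix.diagonal_add]
        funext n; push_cast; ring
      rw [h1, hM]
      simp only [Matrix.mul_add, Matrix.add_mul, Matrix.mul_smul, Matrix.smul_mul, mul_one, hU1]
    have hinv : (Mm + (t:ℂ) • (1 : Matrix (Fin N) (Fin N) ℂ))⁻¹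
        = Dm * Matrix.diagonal c * Dmᴴ := by
      apply Matrix.inv_eq_right_inv
      rw [hsum]
      simp only [Matrix.mul_assoc]
      rw [← Matrix.mul_assoc Dmᴴ Dm, hU2, one_mul,
        ← Matrix.mul_assoc (Matrix.diagonal _) (Matrix.diagonal c), Matrix.diagonal_mul_diagonal]
      have : (fun n => ((d n + t : ℝ) : ℂ) * c n) = fun _ => (1:ℂ) := by
        funext n
        simp only [hc]
        rw [← Complex.ofReal_mul, mul_inv_cancel₀ (hene n), Complex.ofReal_one]
      rw [this, Matrix.diagonal_one, one_mul, hU1]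
    have hCH : (Matrix.diagonal c)ᴴ = Matrix.diagonal c := by
      have hsc : star c = c := by
        funext n; simp [hc, Complex.star_def, Complex.conj_ofReal]
      rw [Matrix.diagonal_conjTranspose, hsc]
    have hFF : F t * (F t)ᴴ = Dm * (Matrix.diagonal c * Φ * Matrix.diagonal c) * Dmᴴ := by
      show ((Mm + (t:ℂ) • 1)⁻¹ * Nm) * ((Mm + (t:ℂ) • 1)⁻¹ * Nm)ᴴ = _
      rw [hinv]
      simp only [Matrix.conjTranspose_mul, Matrix.conjTranspose_conjTranspose, hCH, Φ]
      simp only [Matrix.mul_assoc]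
    have htr : (F t * (F t)ᴴ).trace = ∑ n, c n * Φ n n * c n := by
      rw [hFF, Matrix.trace_mul_cycle, ← Matrix.mul_assoc, hU2, one_mul, Matrix.trace]
      congr 1; funext n
      simp [Matrix.diag, Matrix.mul_apply, Matrix.diagonal_apply, Finset.sum_ite_eq,
        Finset.sum_ite_eq']
    show ((F t * (F t)ᴴ).trace).re = _
    rw [htr, Complex.re_sum]
    congr 1; funext n
    rw [hΦd n]
    simp only [hc]
    rw [← Complex.ofReal_mul, ← Complex.ofReal_mul, Complex.ofReal_re]
    field_simp
  -- entrywise nonvanishing when Nm ≠ 0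
  have hex : Nm ≠ 0 → ∃ n, 0 < φ n := by
    intro hN
    have hBne : B ≠ 0 := by
      intro h
      apply hN
      have : Dm * B = Nm := by rw [hB, ← Matrix.mul_assoc, hU1, one_mul]
      rw [← this, h, Matrix.mul_zero]
    obtain ⟨n, k, hnk⟩ : ∃ n k, B n k ≠ 0 := by
      by_contra h
      push_neg at h
      exact hBne (by ext n k; simpa using h n k)
    refine ⟨n, lt_of_lt_of_le (Complex.normSq_pos.mpr hnk) ?_⟩
    exact Finset.single_le_sum (fun k _ => Complex.normSq_nonneg _) (Finset.mem_univ k)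
  have hcont : ContinuousOn g (Set.Ioi (0:ℝ)) := by
    apply ContinuousOn.congr (f := fun t => ∑ n, φ n / (d n + t) ^ 2)
    · apply continuousOn_finset_sum
      intro n _
      apply ContinuousOn.div continuousOn_const
      · fun_prop
      · intro x hx
        have : (0:ℝ) < d n + x := add_pos_of_nonneg_of_pos (hd n) hx
        positivity
    · intro x hx
      exact hg x hx
  have hanti : Nm ≠ 0 → StrictAntiOn g (Set.Ioi (0:ℝ)) := by
    intro hN s hs t ht hst
    rw [hg s hs, hg t ht]
    obtain ⟨n₀, hn₀⟩ := hex hN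
    refine Finset.sum_lt_sum ?_ ⟨n₀, Finset.mem_univ n₀, ?_⟩
    · intro i _
      have h1 : (0:ℝ) < d i + s := add_pos_of_nonneg_of_pos (hd i) hs
      have h2 : d i + s ≤ d i + t := by linarith
      gcongr
      exact hφ0 i
    · have h1 : (0:ℝ) < d n₀ + s := add_pos_of_nonneg_of_pos (hd n₀) hs
      have h2 : d n₀ + s < d n₀ + t := by linarith
      gcongr
  have htend : Filter.Tendsto g Filter.atTop (nhds 0) := by
    apply Filter.Tendsto.congr' (f₁ := fun t => ∑ n, φ n / (d n + t) ^ 2)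
    · filter_upwards [Filter.eventually_gt_atTop 0] with t ht
      exact (hg t ht).symm
    · have : Filter.Tendsto (fun t : ℝ => ∑ n : Fin N, φ n / (d n + t) ^ 2)
          Filter.atTop (nhds (∑ _n : Fin N, (0:ℝ))) := by
        apply tendsto_finset_sum
        intro n _
        apply Filter.Tendsto.div_atTop tendsto_const_nhds
        have h1 : Filter.Tendsto (fun t : ℝ => d n + t) Filter.atTop Filter.atTop :=
          Filter.tendsto_atTop_add_const_left _ _ Filter.tendsto_id
        simpa [sq] using h1.atTop_mul_atTop₀ h1
      simpa using this
  refine ⟨?_, hcont, hanti, htend, ?_⟩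
  · intro t ht
    rw [hg t ht]
    congr 1; funext n; rw [hΦd n, Complex.ofReal_re]
  · intro hN p hp ⟨t₀, ht₀, hpt₀⟩
    have hsmall : ∀ᶠ t in Filter.atTop, g t < p := htend.eventually_lt_const hp
    obtain ⟨t₁, hgt1, ht01⟩ := (hsmall.and (Filter.eventually_gt_atTop t₀)).exists
    have hsub : Set.Icc t₀ t₁ ⊆ Set.Ioi (0:ℝ) := fun x hx => lt_of_lt_of_le ht₀ hx.1
    obtain ⟨ts, hts, htseq⟩ := intermediate_value_Icc' (le_of_lt ht01) (hcont.mono hsub)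
      ⟨le_of_lt hgt1, le_of_lt hpt₀⟩
    have htsmem : ts ∈ Set.Ioi (0:ℝ) := hsub hts
    refine ⟨ts, ⟨htsmem, htseq⟩, ?_⟩
    rintro y ⟨hy, hgy⟩
    exact (hanti hN).injOn (Set.mem_Ioi.mpr hy) htsmem (by rw [hgy, htseq])
end
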